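/- Let G be a countable IB-homogeneous graph with infinite star number (G embeds the star K_{1,n} for every n) that represents m (some bimorphism maps a nonedge to an edge). Then every finite subset of G has a cone: a vertex adjacent to all its elements. -/

import Mathlib

/-- A bimorphism of a graph: a bijective edge-preserving self-map. -/
def IsBimorphism {V : Type*} (G : SimpleGraph V) (F : V → V) : Prop :=
  Function.Bijective F ∧ ∀ u v, G.Adj u v → G.Adj (F u) (F v)

/-- A partial isomorphism of `G` with finite domain `S`. -/
def IsPartialIso {V : Type*} (G : SimpleGraph V) (S : Finset V) (f : V → V) : Prop :=
  Set.InjOn f S ∧ ∀ u ∈ S, ∀ v ∈ S, (G.Adj u v ↔ G.Adj (f u) (f v))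

/-- `G` is IB-homogeneous: every isomorphism between finite induced subgraphs
extends to a bimorphism of `G`. -/
def IBHom {V : Type*} (G : SimpleGraph V) : Prop :=
  ∀ (S : Finset V) (f : V → V), IsPartialIso G S f →
    ∃ F : V → V, IsBimorphism G F ∧ ∀ x ∈ S, F x = f x

/-- `G` represents the monomorphism `m`: some bimorphism maps a nonedge to an edge. -/
def RepM {V : Type*} (G : SimpleGraph V) : Prop :=
  ∃ F : V → V, IsBimorphism G F ∧
    ∃ u v : V, u ≠ v ∧ ¬ G.Adj u v ∧ G.Adj (F u) (F v)

/-- An independent set: pairwise nonadjacent vertices. -/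
def IsIndep {V : Type*} (G : SimpleGraph V) (s : Set V) : Prop :=
  s.Pairwise fun u v => ¬ G.Adj u v

/-!
An edge `uv` of a finite set `X` can be pulled back along a bimorphism to a nonedge `ab`: first
take a bimorphism `F` witnessing `m`, sending a nonedge `ab` to an edge `F a F b`, then extend
the partial isomorphism `F a ↦ u, F b ↦ v`. The preimage of `X` has fewer edges, so by induction
every finite `X` is the bimorphic image of an independent set `I`. A star with `|I|` leaves
gives, again by IB-homogeneity, a cone over `I`, and bimorphisms carry cones to cones.
-/

open Finset

section

variable {V : Type*} {G : SimpleGraph V}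

lemma IsBimorphism.comp {F K : V → V} (hF : IsBimorphism G F) (hK : IsBimorphism G K) :
    IsBimorphism G (F ∘ K) :=
  ⟨hF.1.comp hK.1, fun _ _ h => hF.2 _ _ (hK.2 _ _ h)⟩

lemma isPartialIso_pair [DecidableEq V] {x y u v : V} (hxy : G.Adj x y) (huv : G.Adj u v) :
    IsPartialIso G {x, y} (fun z => if z = x then u else v) := by
  have hyx : y ≠ x := hxy.ne.symm
  constructor
  · intro z hz w hw
    simp only [coe_insert, coe_singleton, Set.mem_insert_iff, Set.mem_singleton_iff] at hz hw
    rcases hz with rfl | rfl <;> rcases hw with rfl | rfl <;> simp [hyx, huv.ne, huv.ne.symm]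
  · intro z hz w hw
    simp only [mem_insert, mem_singleton] at hz hw
    rcases hz with rfl | rfl <;> rcases hw with rfl | rfl <;>
      simp [hyx, hxy, huv, hxy.symm, huv.symm]

lemma isPartialIso_of_mapsTo_indep {S : Finset V} {T : Set V} {f : V → V}
    (hS : IsIndep G ↑S) (hT : IsIndep G T) (hmaps : Set.MapsTo f S T) (hinj : Set.InjOn f S) :
    IsPartialIso G S f := by
  refine ⟨hinj, fun x hx y hy => ?_⟩
  by_cases hxy : x = y
  · subst hxy
    simp
  · exact iff_of_false (hS hx hy hxy) (hT (hmaps hx) (hmaps hy) (hinj.ne hx hy hxy))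

lemma IBHom.exists_bimorphism_map_edge (hG : IBHom G) (hm : RepM G) {u v : V}
    (huv : G.Adj u v) : ∃ Φ, IsBimorphism G Φ ∧ ∃ a b, ¬ G.Adj a b ∧ Φ a = u ∧ Φ b = v := by
  classical
  obtain ⟨F, hF, a, b, -, hab, hFab⟩ := hm
  obtain ⟨H, hH, hHf⟩ := hG _ _ (isPartialIso_pair hFab huv)
  refine ⟨H ∘ F, hH.comp hF, a, b, hab, ?_, ?_⟩
  · simp [hHf (F a) (by simp)]
  · simp [hHf (F b) (by simp), hFab.ne.symm]

lemma IBHom.exists_cone_of_indep (hG : IBHom G) {c : V} {s I : Finset V} (hs : IsIndep G ↑s)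
    (hc : ∀ v ∈ s, G.Adj c v) (hI : IsIndep G ↑I) (hcard : s.card = I.card) :
    ∃ c', ∀ v ∈ I, G.Adj c' v := by
  have : Nonempty V := ⟨c⟩
  obtain ⟨f, hf⟩ := s.finite_toSet.exists_bijOn_of_encard_eq (t := (I : Set V))
    (by simp [Set.encard_coe_eq_coe_finsetCard, hcard])
  obtain ⟨H, hH, hHf⟩ := hG s f (isPartialIso_of_mapsTo_indep hs hI hf.mapsTo hf.injOn)
  refine ⟨H c, fun v hv => ?_⟩
  obtain ⟨w, hw, rfl⟩ := hf.surjOn hv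
  rw [← hHf w hw]
  exact hH.2 _ _ (hc w hw)

open scoped Classical

noncomputable def adjPairs (G : SimpleGraph V) (X : Finset V) : Finset (V × V) :=
  (X ×ˢ X).filter fun p => G.Adj p.1 p.2

lemma card_adjPairs_preimage_lt {Φ : V → V} (hΦ : IsBimorphism G Φ) {X : Finset V} {a b : V}
    (hab : ¬ G.Adj a b) (hΦab : (Φ a, Φ b) ∈ adjPairs G X) :
    (adjPairs G (X.preimage Φ hΦ.1.1.injOn)).card < (adjPairs G X).card := by
  rw [← card_image_of_injective _ (hΦ.1.1.prodMap hΦ.1.1)]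
  refine card_lt_card ⟨fun p hp => ?_, fun h => ?_⟩
  · obtain ⟨⟨x, y⟩, hxy, rfl⟩ := mem_image.1 hp
    simp only [adjPairs, mem_filter, mem_product, mem_preimage] at hxy ⊢
    exact ⟨hxy.1, hΦ.2 _ _ hxy.2⟩
  · obtain ⟨⟨x, y⟩, hxy, he⟩ := mem_image.1 (h hΦab)
    simp only [Prod.map, Prod.mk.injEq] at he
    rw [hΦ.1.1 he.1, hΦ.1.1 he.2] at hxy
    exact hab (mem_filter.1 hxy).2

lemma IBHom.exists_bimorphism_indep_image (hG : IBHom G) (hm : RepM G) (X : Finset V) :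
    ∃ (F : V → V) (I : Finset V), IsBimorphism G F ∧ IsIndep G ↑I ∧ I.image F = X := by
  induction hX : (adjPairs G X).card using Nat.strong_induction_on generalizing X with
  | _ n ih =>
  by_cases hindep : IsIndep G ↑X
  · exact ⟨id, X, ⟨Function.bijective_id, fun _ _ h => h⟩, hindep, image_id⟩
  obtain ⟨u, hu, v, hv, -, huv⟩ : ∃ u ∈ X, ∃ v ∈ X, u ≠ v ∧ G.Adj u v := by
    simpa [IsIndep, Set.Pairwise] using hindep
  obtain ⟨Φ, hΦ, a, b, hab, rfl, rfl⟩ := hG.exists_bimorphism_map_edge hm huv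
  have hfewer := card_adjPairs_preimage_lt (X := X) hΦ hab (by simp [adjPairs, hu, hv, huv])
  obtain ⟨K, I, hK, hI, hKI⟩ := ih _ (hX ▸ hfewer) _ rfl
  refine ⟨Φ ∘ K, I, hΦ.comp hK, hI, ?_⟩
  rw [← image_image, hKI, image_preimage_of_bijective _ hΦ.1]

end

theorem stmt10_general {V : Type*} (G : SimpleGraph V) (hG : IBHom G) (hm : RepM G)
    (hstar : ∀ n : ℕ, ∃ (c : V) (s : Finset V), s.card = n ∧ c ∉ s ∧
      IsIndep G ↑s ∧ ∀ v ∈ s, G.Adj c v) :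
    ∀ X : Finset V, ∃ v : V, ∀ x ∈ X, G.Adj v x := by
  classical
  intro X
  obtain ⟨F, I, hF, hI, rfl⟩ := hG.exists_bimorphism_indep_image hm X
  obtain ⟨c, s, hs, -, hsi, hc⟩ := hstar I.card
  obtain ⟨c', hc'⟩ := hG.exists_cone_of_indep hsi hc hI hs
  refine ⟨F c', fun x hx => ?_⟩
  obtain ⟨i, hi, rfl⟩ := mem_image.1 hx
  exact hF.2 _ _ (hc' i hi)

/-- A countable IB-homogeneous graph with infinite star number representing `m` has the
cone property: every finite subset has a cone. -/
theorem stmt10 {V : Type*} [Countable V] (G : SimpleGraph V) (hG : IBHom G) (hm : RepM G)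
    (hstar : ∀ n : ℕ, ∃ (c : V) (s : Finset V), s.card = n ∧ c ∉ s ∧
      IsIndep G ↑s ∧ ∀ v ∈ s, G.Adj c v) :
    ∀ X : Finset V, ∃ v : V, ∀ x ∈ X, G.Adj v x :=
  stmt10_general G hG hm hstar
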